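/- Let W = W₁ × W₂ be a finite Coxeter group with S = S₁ ⊔ S₂. There is a unique ring homomorphism τ : Ω(W,S) → Ω(W₁,S₁) ⊗_ℤ Ω(W₂,S₂) with τ(e_s) = e_s ⊗ 1 and τ(x_s) = x_s ⊗ 1 for s ∈ S₁, and τ(e_s) = 1 ⊗ e_s and τ(x_s) = 1 ⊗ x_s for s ∈ S₂. -/

import Mathlib

open scoped TensorProduct

noncomputable section

namespace WGraphPaper

variable (k : Type*) [CommRing k] {B B₁ B₂ : Type*}

/-! ### Gyoja's W-graph algebra with coefficients in `k`
(`Omega ℤ M` is the W-graph algebra `Ω(W,S)` itself, `Omega k M` is `kΩ`). -/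

/-- The free ring `k⟨e_b, x_b | b ∈ B⟩`; `Sum.inl b` encodes the generator `e_b` and
`Sum.inr b` encodes the generator `x_b`. -/
abbrev FreeGen (B : Type*) := FreeAlgebra k (B ⊕ B)

def eGen (b : B) : FreeGen k B := FreeAlgebra.ι k (Sum.inl b)
def xGen (b : B) : FreeGen k B := FreeAlgebra.ι k (Sum.inr b)

/-- `altProd a b n` is the alternating product `a * b * a * ⋯` with `n` factors. -/
def altProd {A : Type*} [Monoid A] : A → A → ℕ → A
  | _, _, 0 => 1
  | a, b, n + 1 => a * altProd b a n

/-- The braid commutator `Δ_m(a,b) = (a b a ⋯) - (b a b ⋯)` (`m` factors each). -/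
def braidComm {A : Type*} [Ring A] (m : ℕ) (a b : A) : A := altProd a b m - altProd b a m

/-- `ι(T_b) = -v⁻¹ e_b + v (1 - e_b) + x_b`, an element of `(FreeGen k B)[v,v⁻¹]`. -/
def iotaT (b : B) : LaurentPolynomial (FreeGen k B) :=
  LaurentPolynomial.C (-(eGen k b)) * LaurentPolynomial.T (-1)
    + LaurentPolynomial.C (1 - eGen k b) * LaurentPolynomial.T 1
    + LaurentPolynomial.C (xGen k b)

/-- The coefficient of `v^n` in a Laurent polynomial. -/
def lcoeff {R : Type*} [Semiring R] (p : LaurentPolynomial R) (n : ℤ) : R :=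
  p.coeff n

/-- The defining relations of Gyoja's W-graph algebra: the relations (a) and (b) together
with the vanishing of all Laurent coefficients `y^γ(s,t)` of the braid commutators
`Δ_{m_{st}}(ι(T_s), ι(T_t))` (for `m_{st} < ∞`, i.e. `M s t ≠ 0`). -/
inductive OmegaRel (M : CoxeterMatrix B) : FreeGen k B → FreeGen k B → Prop
  | e_idem (b : B) : OmegaRel M (eGen k b * eGen k b) (eGen k b)
  | e_comm (b b' : B) : OmegaRel M (eGen k b * eGen k b') (eGen k b' * eGen k b)
  | ex (b : B) : OmegaRel M (eGen k b * xGen k b) (xGen k b)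
  | xe (b : B) : OmegaRel M (xGen k b * eGen k b) 0
  | braid (b b' : B) (h : M b b' ≠ 0) (γ : ℤ) :
      OmegaRel M (lcoeff (braidComm (M b b') (iotaT k b) (iotaT k b')) γ) 0

/-- Gyoja's W-graph algebra `Ω(W,S)` (for `k = ℤ`), resp. `kΩ(W,S)`, defined from
the Coxeter matrix of `(W,S)`. -/
abbrev Omega (M : CoxeterMatrix B) := RingQuot (OmegaRel k M)

/-- The image of the generator `e_b` in `Ω`. -/
def eOm (M : CoxeterMatrix B) (b : B) : Omega k M :=
  RingQuot.mkRingHom (OmegaRel k M) (eGen k b)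

/-- The image of the generator `x_b` in `Ω`. -/
def xOm (M : CoxeterMatrix B) (b : B) : Omega k M :=
  RingQuot.mkRingHom (OmegaRel k M) (xGen k b)

lemma commute_eOm (M : CoxeterMatrix B) (b b' : B) : Commute (eOm k M b) (eOm k M b') := by
  show _ = _
  rw [eOm, eOm, ← map_mul, ← map_mul]
  exact RingQuot.mkRingHom_rel (OmegaRel.e_comm b b')

lemma commute_oneSubEOm (M : CoxeterMatrix B) (b b' : B) :
    Commute (1 - eOm k M b) (1 - eOm k M b') :=
  (Commute.one_left _).sub_left ((Commute.one_right _).sub_right (commute_eOm k M b b'))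

variable [Fintype B] [DecidableEq B] [DecidableEq B₁] [DecidableEq B₂]

/-- The idempotent `E_I = (∏_{t ∈ I} e_t) (∏_{t ∈ S∖I} (1 - e_t))`. -/
def EOm (M : CoxeterMatrix B) (I : Finset B) : Omega k M :=
  (I.noncommProd (fun b => eOm k M b) (fun _ _ _ _ _ => commute_eOm k M _ _)) *
    ((Iᶜ).noncommProd (fun b => 1 - eOm k M b) (fun _ _ _ _ _ => commute_oneSubEOm k M _ _))

/-- The edge element `X_{IJ}^s = E_I x_s E_J`. -/
def XOm (M : CoxeterMatrix B) (I J : Finset B) (s : B) : Omega k M :=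
  EOm k M I * xOm k M s * EOm k M J

/-- `I ← J` is an edge of the compatibility graph `Q_W`: `I ∖ J ≠ ∅` and no element of
`I ∖ J` commutes (in `W`, i.e. `m_{st} = 2`) with an element of `J ∖ I`. -/
def QEdge (M : CoxeterMatrix B) (I J : Finset B) : Prop :=
  (I \ J).Nonempty ∧ ∀ s ∈ I \ J, ∀ t ∈ J \ I, M s t ≠ 2

/-- `I ⇆ J`: `I` and `J` are joined by a pair of transversal edges of `Q_W`. -/
def Transversal (M : CoxeterMatrix B) (I J : Finset B) : Prop :=
  QEdge M I J ∧ (J \ I).Nonempty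

/-- The generators of the subalgebra `Ψ(W,S)`: all `E_I` and all transversal edge
elements `X_{IJ}`. -/
def psiGens (M : CoxeterMatrix B) : Set (Omega k M) :=
  {a | ∃ I : Finset B, a = EOm k M I} ∪
    {a | ∃ I J : Finset B, ∃ s : B, Transversal M I J ∧ s ∈ I \ J ∧ a = XOm k M I J s}

/-- The subring `Ψ(W,S) ⊆ Ω(W,S)` generated by all `E_I` and all transversal edges. -/
def Psi (M : CoxeterMatrix B) : Subring (Omega k M) := Subring.closure (psiGens k M)

/-- The subalgebra `kΨ(W,S) ⊆ kΩ(W,S)` generated by all `E_I` and all transversal edges. -/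
def PsiAlg (M : CoxeterMatrix B) : Subalgebra k (Omega k M) :=
  Algebra.adjoin k (psiGens k M)

/-! ### Products of Coxeter systems -/

/-- The Coxeter matrix of the product `W₁ × W₂`, on `S = S₁ ⊔ S₂` (each element of `S₁`
commutes with each element of `S₂`). -/
def prodMatrix (M₁ : CoxeterMatrix B₁) (M₂ : CoxeterMatrix B₂) : CoxeterMatrix (B₁ ⊕ B₂) where
  M i j :=
    match i, j with
    | Sum.inl a, Sum.inl b => M₁ a b
    | Sum.inr a, Sum.inr b => M₂ a b
    | _, _ => 2
  isSymm := by
    unfold Matrix.IsSymm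
    ext i j
    rcases i with a | a <;> rcases j with b | b <;>
      simp only [Matrix.transpose_apply] <;>
      first
        | exact M₁.symmetric b a
        | exact M₂.symmetric b a
        | rfl
  diagonal i := by rcases i with a | a <;> simp [CoxeterMatrix.diagonal]
  off_diagonal i j h := by
    rcases i with a | a <;> rcases j with b | b
    · exact M₁.off_diagonal a b (by rintro rfl; exact h rfl)
    · simp
    · simp
    · exact M₂.off_diagonal a b (by rintro rfl; exact h rfl)

def inlEmb : B₁ ↪ B₁ ⊕ B₂ := ⟨Sum.inl, Sum.inl_injective⟩
def inrEmb : B₂ ↪ B₁ ⊕ B₂ := ⟨Sum.inr, Sum.inr_injective⟩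

/-- The subset `I ⊔ K` of `S = S₁ ⊔ S₂`, for `I ⊆ S₁` and `K ⊆ S₂`. -/
def fjoin (I : Finset B₁) (K : Finset B₂) : Finset (B₁ ⊕ B₂) :=
  I.map inlEmb ∪ K.map inrEmb

/-- The part `I₁ = I ∩ S₁` of a subset `I ⊆ S = S₁ ⊔ S₂`. -/
def part1 (I : Finset (B₁ ⊕ B₂)) : Finset B₁ :=
  I.preimage Sum.inl Sum.inl_injective.injOn

/-- The part `I₂ = I ∩ S₂` of a subset `I ⊆ S = S₁ ⊔ S₂`. -/
def part2 (I : Finset (B₁ ⊕ B₂)) : Finset B₂ :=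
  I.preimage Sum.inr Sum.inr_injective.injOn

variable (M₁ : CoxeterMatrix B₁) (M₂ : CoxeterMatrix B₂)

/-- `f` is the parabolic morphism `ι₁ : Ω₁ → Ω` (it sends `e_s ↦ e_s`, `x_s ↦ x_s`
for `s ∈ S₁`). -/
def Parab1Cond (f : Omega k M₁ → Omega k (prodMatrix M₁ M₂)) : Prop :=
  ∀ b : B₁, f (eOm k M₁ b) = eOm k (prodMatrix M₁ M₂) (Sum.inl b) ∧
    f (xOm k M₁ b) = xOm k (prodMatrix M₁ M₂) (Sum.inl b)

/-- `f` is the parabolic morphism `ι₂ : Ω₂ → Ω` (it sends `e_s ↦ e_s`, `x_s ↦ x_s`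
for `s ∈ S₂`). -/
def Parab2Cond (f : Omega k M₂ → Omega k (prodMatrix M₁ M₂)) : Prop :=
  ∀ b : B₂, f (eOm k M₂ b) = eOm k (prodMatrix M₁ M₂) (Sum.inr b) ∧
    f (xOm k M₂ b) = xOm k (prodMatrix M₁ M₂) (Sum.inr b)

/-- `t` is the morphism `τ : Ω → Ω₁ ⊗ Ω₂` of the paper: it sends `e_s ↦ e_s ⊗ 1`,
`x_s ↦ x_s ⊗ 1` for `s ∈ S₁` and `e_s ↦ 1 ⊗ e_s`, `x_s ↦ 1 ⊗ x_s` for `s ∈ S₂`. -/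
def TauCond (t : Omega k (prodMatrix M₁ M₂) → Omega k M₁ ⊗[k] Omega k M₂) : Prop :=
  (∀ b : B₁, t (eOm k (prodMatrix M₁ M₂) (Sum.inl b)) = eOm k M₁ b ⊗ₜ[k] 1 ∧
      t (xOm k (prodMatrix M₁ M₂) (Sum.inl b)) = xOm k M₁ b ⊗ₜ[k] 1) ∧
  (∀ b : B₂, t (eOm k (prodMatrix M₁ M₂) (Sum.inr b)) = 1 ⊗ₜ[k] eOm k M₂ b ∧
      t (xOm k (prodMatrix M₁ M₂) (Sum.inr b)) = 1 ⊗ₜ[k] xOm k M₂ b)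



/-- The coefficientwise extension of a ring homomorphism to Laurent polynomial rings. -/
def laurentMap {R A : Type*} [Semiring R] [Semiring A] (f : R →+* A) :
    LaurentPolynomial R →+* LaurentPolynomial A :=
  AddMonoidAlgebra.liftNCRingHom (LaurentPolynomial.C.comp f)
    { toFun := fun n => LaurentPolynomial.T (Multiplicative.toAdd n)
      map_one' := LaurentPolynomial.T_zero
      map_mul' := fun _ _ => LaurentPolynomial.T_add _ _ }
    (fun _ n => (LaurentPolynomial.commute_T (Multiplicative.toAdd n) _).symm)

/-- `k` is a good ring for `(W,S)`: it contains `2cos(2π/m_{st})` for all `s,t ∈ S`. -/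
def GoodRing (M : CoxeterMatrix B) (k : Subring ℂ) : Prop :=
  ∀ i j : B, M i j ≠ 0 → (2 * Complex.cos (2 * Real.pi / (M i j : ℂ))) ∈ k

/-- The irreducible complex characters of a finite group `G`. -/
def IrrChar (G : Type) [Group G] : Type :=
  {χ : G → ℂ // ∃ V : FDRep ℂ G, CategoryTheory.Simple V ∧ χ = FDRep.character V}

/-- The degree `d_λ` of an irreducible character `λ` (its value at `1`). -/
def IrrChar.degree {G : Type} [Group G] (χ : IrrChar G) : ℕ := ⌊(χ.val 1).re⌋₊

variable {ι : Type*}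

/-- (Z1): the `F^λ` are a decomposition of the identity into orthogonal idempotents. -/
def Z1 {A : Type*} [Ring A] (F : ι → A) : Prop :=
  (∀ l, F l * F l = F l) ∧ (∀ l m, l ≠ m → F l * F m = 0) ∧ ∑ᶠ l, F l = 1

variable [Fintype B] [DecidableEq B]

/-- (Z2): the decomposition is compatible with the one coming from the path-algebra
structure: `E_I F^λ = F^λ E_I`. -/
def Z2 (M : CoxeterMatrix B) (F : ι → Omega k M) : Prop :=
  ∀ l (I : Finset B), EOm k M I * F l = F l * EOm k M I

/-- (Z3), with a specified partial order `le`: only "downward edges" exist,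
i.e. `F^λ Ω F^μ ≠ 0 → λ ⪯ μ`. -/
def Z3At {A : Type*} [Ring A] (F : ι → A) (le : ι → ι → Prop) : Prop :=
  ∀ l m, (∃ a : A, F l * a * F m ≠ 0) → le l m

/-- (Z3): there is a partial order on `Irr(W)` such that only "downward edges" exist. -/
def Z3 {A : Type*} [Ring A] (F : ι → A) : Prop :=
  ∃ le : ι → ι → Prop, IsPartialOrder ι le ∧ Z3At F le

/-- (Z4): there are surjective `k`-algebra morphisms `k^{d_λ×d_λ} ↠ F^λ kΩ F^λ`. -/
def Z4 (M : CoxeterMatrix B) (F : ι → Omega k M) (d : ι → ℕ) : Prop :=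
  ∀ l, ∃ ψ : Matrix (Fin (d l)) (Fin (d l)) k →ₗ[k] Omega k M,
    (∀ x y, ψ (x * y) = ψ x * ψ y) ∧ ψ 1 = F l ∧
      Set.range ψ = {z | ∃ a : Omega k M, z = F l * a * F l}

/-- (Z5): `F^λ X_{IJ} F^λ ∈ kΨ(W,S)` for all edges `I ← J` of `Q_W`. -/
def Z5 (M : CoxeterMatrix B) (F : ι → Omega k M) : Prop :=
  ∀ l (I J : Finset B) (s : B), QEdge M I J → s ∈ I \ J →
    F l * XOm k M I J s * F l ∈ PsiAlg k M

/-- (Z6): `F^λ ∈ kΨ(W,S)`. -/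
def Z6 (M : CoxeterMatrix B) (F : ι → Omega k M) : Prop :=
  ∀ l, F l ∈ PsiAlg k M

/-- The family satisfies all of (Z1)–(Z6), i.e. the strong W-graph decomposition
conjecture holds via this family (`d` is the degree function on `Irr(W)`). -/
def StrongZ (M : CoxeterMatrix B) (F : ι → Omega k M) (d : ι → ℕ) : Prop :=
  Z1 F ∧ Z2 k M F ∧ Z3 F ∧ Z4 k M F d ∧ Z5 k M F ∧ Z6 k M F

/-- The maximal length (number of steps) of a strict chain for the relation `le`. -/
def orderHeight (le : ι → ι → Prop) : ℕ :=
  sSup {n | ∃ c : Fin (n + 1) → ι, Function.Injective c ∧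
    ∀ i j : Fin (n + 1), i < j → le (c i) (c j)}

/-! Define `τ` on the free ring by its values on the generators; it descends to `Ω(W,S)` because
it kills every defining relation. A relation whose letters all lie in `S₁` is the image, under
the renaming `S₁ ↪ S`, of the same relation of `Ω(W₁,S₁)`, so `τ` sends it to `r ⊗ 1` with
`r = 0` (likewise for `S₂`). For `s ∈ S₁` and `t ∈ S₂` we have `m_{st} = 2`, so the mixed
relations only say that `e_s, x_s` commute with `e_t, x_t` and that `ι(T_s)` commutes with
`ι(T_t)`; both hold after applying `τ`, since the coefficients of `τ(ι(T_s))` lie in `Ω₁ ⊗ 1` and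
those of `τ(ι(T_t))` in `1 ⊗ Ω₂`. Uniqueness: a ring homomorphism out of `Ω(W,S)` is determined
by its values on the generators. -/

open LaurentPolynomial

section Laurent

variable {R R' R'' A : Type*}

section Semiring

variable [Semiring R] [Semiring R'] [Semiring A]

theorem laurentMap_C_mul_T (f : R →+* A) (a : R) (n : ℤ) :
    laurentMap f (C a * T n) = C (f a) * T n := by
  rw [← single_eq_C_mul_T]
  show AddMonoidAlgebra.liftNC _ _ _ = _
  rw [AddMonoidAlgebra.liftNC_single]
  rfl

theorem laurentMap_C (f : R →+* A) (a : R) : laurentMap f (C a) = C (f a) := by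
  simpa using laurentMap_C_mul_T f a 0

theorem laurentMap_T (f : R →+* A) (n : ℤ) : laurentMap f (T n) = T n := by
  simpa using laurentMap_C_mul_T f 1 n

theorem lcoeff_laurentMap (f : R →+* A) (p : LaurentPolynomial R) (γ : ℤ) :
    lcoeff (laurentMap f p) γ = f (lcoeff p γ) := by
  induction p using LaurentPolynomial.induction_on' with
  | add p q hp hq =>
    simp only [lcoeff, map_add, AddMonoidAlgebra.coeff_add, Finsupp.add_apply] at *
    rw [hp, hq]
  | C_mul_T n a =>
    rw [laurentMap_C_mul_T, lcoeff, lcoeff, ← single_eq_C_mul_T, ← single_eq_C_mul_T]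
    simp only [AddMonoidAlgebra.coeff_single, Finsupp.single_apply]
    split_ifs <;> simp

theorem laurentMap_laurentMap (f : R →+* R') (g : R' →+* A) (p : LaurentPolynomial R) :
    laurentMap g (laurentMap f p) = laurentMap (g.comp f) p := by
  induction p using LaurentPolynomial.induction_on' with
  | add p q hp hq => simp only [map_add, hp, hq]
  | C_mul_T n a => simp only [laurentMap_C_mul_T, RingHom.comp_apply]

theorem commute_laurentMap {f : R →+* A} {g : R' →+* A} (h : ∀ a b, Commute (f a) (g b))
    (p : LaurentPolynomial R) (q : LaurentPolynomial R') :
    Commute (laurentMap f p) (laurentMap g q) := by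
  induction p using LaurentPolynomial.induction_on' with
  | add p p' hp hp' => rw [map_add]; exact hp.add_left hp'
  | C_mul_T n a =>
    induction q using LaurentPolynomial.induction_on' with
    | add q q' hq hq' => rw [map_add]; exact hq.add_right hq'
    | C_mul_T m b =>
      rw [laurentMap_C_mul_T, laurentMap_C_mul_T]
      exact (((h a b).map C).mul_right (commute_T m _).symm).mul_left
        ((commute_T n _).mul_right (commute_T n _))

end Semiring

section Ring

variable [Ring R] [Ring R'] [Ring R''] [Ring A]

theorem map_altProd (f : R →+* A) (a b : R) (n : ℕ) :
    f (altProd a b n) = altProd (f a) (f b) n := by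
  induction n generalizing a b with
  | zero => exact map_one f
  | succ n ih => rw [altProd, altProd, map_mul, ih]

theorem map_braidComm (f : R →+* A) (m : ℕ) (a b : R) :
    f (braidComm m a b) = braidComm m (f a) (f b) := by
  rw [braidComm, braidComm, map_sub, map_altProd, map_altProd]

theorem braidComm_two_eq_zero_of_commute {a b : R} (h : Commute a b) : braidComm 2 a b = 0 := by
  simp [braidComm, altProd, h.eq]

theorem lcoeff_braidComm_laurentMap (f : R →+* A) (m : ℕ) (p q : LaurentPolynomial R) (γ : ℤ) :
    lcoeff (braidComm m (laurentMap f p) (laurentMap f q)) γ = f (lcoeff (braidComm m p q) γ) := by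
  rw [← map_braidComm, lcoeff_laurentMap]

theorem map_lcoeff_braidComm_two_eq_zero (f : R →+* A) (g : R' →+* R) (g' : R'' →+* R)
    (h : ∀ a b, Commute (f (g a)) (f (g' b))) (p : LaurentPolynomial R')
    (q : LaurentPolynomial R'') (γ : ℤ) :
    f (lcoeff (braidComm 2 (laurentMap g p) (laurentMap g' q)) γ) = 0 := by
  rw [← lcoeff_braidComm_laurentMap, laurentMap_laurentMap, laurentMap_laurentMap,
    braidComm_two_eq_zero_of_commute (commute_laurentMap h p q)]
  rfl

end Ring

end Laurent

section Omega

variable (k : Type*) [CommRing k] {B B' : Type*}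

theorem eOm_mul_eOm_self (M : CoxeterMatrix B) (b : B) : eOm k M b * eOm k M b = eOm k M b := by
  rw [eOm, ← map_mul]
  exact RingQuot.mkRingHom_rel (OmegaRel.e_idem b)

theorem eOm_mul_xOm (M : CoxeterMatrix B) (b : B) : eOm k M b * xOm k M b = xOm k M b := by
  rw [eOm, xOm, ← map_mul]
  exact RingQuot.mkRingHom_rel (OmegaRel.ex b)

theorem xOm_mul_eOm (M : CoxeterMatrix B) (b : B) : xOm k M b * eOm k M b = 0 := by
  rw [eOm, xOm, ← map_mul, ← map_zero (RingQuot.mkRingHom (OmegaRel k M))]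
  exact RingQuot.mkRingHom_rel (OmegaRel.xe b)

theorem mkRingHom_lcoeff_braidComm (M : CoxeterMatrix B) {b b' : B} (h : M b b' ≠ 0) (γ : ℤ) :
    RingQuot.mkRingHom (OmegaRel k M)
      (lcoeff (braidComm (M b b') (iotaT k b) (iotaT k b')) γ) = 0 := by
  rw [← map_zero (RingQuot.mkRingHom (OmegaRel k M))]
  exact RingQuot.mkRingHom_rel (OmegaRel.braid b b' h γ)

theorem _root_.RingQuot.mkAlgHom_apply {A : Type*} [Semiring A] [Algebra k A]
    (s : A → A → Prop) (a : A) : RingQuot.mkAlgHom k s a = RingQuot.mkRingHom s a :=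
  DFunLike.congr_fun (RingQuot.mkAlgHom_coe k s) a

theorem Omega.ringHom_ext_int {M : CoxeterMatrix B} {A : Type*} [NonAssocSemiring A]
    {f g : Omega ℤ M →+* A} (he : ∀ b, f (eOm ℤ M b) = g (eOm ℤ M b))
    (hx : ∀ b, f (xOm ℤ M b) = g (xOm ℤ M b)) : f = g := by
  ext p
  induction p using FreeAlgebra.induction with
  | grade0 n =>
    exact RingHom.congr_fun (RingHom.ext_int ((f.comp _).comp (algebraMap ℤ _))
      ((g.comp (RingQuot.mkRingHom _)).comp (algebraMap ℤ _))) n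
  | grade1 s => rcases s with b | b; exacts [he b, hx b]
  | mul p q hp hq => simp only [RingHom.comp_apply, map_mul] at *; rw [hp, hq]
  | add p q hp hq => simp only [RingHom.comp_apply, map_add] at *; rw [hp, hq]

def FreeGen.rename (φ : B → B') : FreeGen k B →ₐ[k] FreeGen k B' :=
  FreeAlgebra.lift k (FreeAlgebra.ι k ∘ Sum.map φ φ)

@[simp]
theorem FreeGen.rename_eGen (φ : B → B') (b : B) :
    FreeGen.rename k φ (eGen k b) = eGen k (φ b) := by
  simp [FreeGen.rename, eGen]

@[simp]
theorem FreeGen.rename_xGen (φ : B → B') (b : B) :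
    FreeGen.rename k φ (xGen k b) = xGen k (φ b) := by
  simp [FreeGen.rename, xGen]

theorem laurentMap_rename_iotaT (φ : B → B') (b : B) :
    laurentMap (FreeGen.rename k φ).toRingHom (iotaT k b) = iotaT k (φ b) := by
  simp [iotaT, laurentMap_C, laurentMap_T]

theorem rename_lcoeff_braidComm_iotaT (φ : B → B') (m : ℕ) (b b' : B) (γ : ℤ) :
    FreeGen.rename k φ (lcoeff (braidComm m (iotaT k b) (iotaT k b')) γ) =
      lcoeff (braidComm m (iotaT k (φ b)) (iotaT k (φ b'))) γ := by
  rw [← laurentMap_rename_iotaT, ← laurentMap_rename_iotaT, lcoeff_braidComm_laurentMap]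
  rfl

end Omega

section Product

variable (k : Type*) [CommRing k] {B₁ B₂ : Type*} (M₁ : CoxeterMatrix B₁) (M₂ : CoxeterMatrix B₂)

@[simp]
theorem prodMatrix_inl_inl (b b' : B₁) : prodMatrix M₁ M₂ (.inl b) (.inl b') = M₁ b b' := rfl

@[simp]
theorem prodMatrix_inr_inr (b b' : B₂) : prodMatrix M₁ M₂ (.inr b) (.inr b') = M₂ b b' := rfl

@[simp]
theorem prodMatrix_inl_inr (b : B₁) (b' : B₂) : prodMatrix M₁ M₂ (.inl b) (.inr b') = 2 := rfl

@[simp]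
theorem prodMatrix_inr_inl (b : B₂) (b' : B₁) : prodMatrix M₁ M₂ (.inr b) (.inl b') = 2 := rfl

def tauFree : FreeGen k (B₁ ⊕ B₂) →ₐ[k] Omega k M₁ ⊗[k] Omega k M₂ :=
  FreeAlgebra.lift k fun
    | .inl (.inl b) => eOm k M₁ b ⊗ₜ 1
    | .inl (.inr b) => 1 ⊗ₜ eOm k M₂ b
    | .inr (.inl b) => xOm k M₁ b ⊗ₜ 1
    | .inr (.inr b) => 1 ⊗ₜ xOm k M₂ b

@[simp]
theorem tauFree_eGen_inl (b : B₁) : tauFree k M₁ M₂ (eGen k (.inl b)) = eOm k M₁ b ⊗ₜ 1 := by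
  simp [tauFree, eGen]

@[simp]
theorem tauFree_eGen_inr (b : B₂) : tauFree k M₁ M₂ (eGen k (.inr b)) = 1 ⊗ₜ eOm k M₂ b := by
  simp [tauFree, eGen]

@[simp]
theorem tauFree_xGen_inl (b : B₁) : tauFree k M₁ M₂ (xGen k (.inl b)) = xOm k M₁ b ⊗ₜ 1 := by
  simp [tauFree, xGen]

@[simp]
theorem tauFree_xGen_inr (b : B₂) : tauFree k M₁ M₂ (xGen k (.inr b)) = 1 ⊗ₜ xOm k M₂ b := by
  simp [tauFree, xGen]

theorem tauFree_rename_inl (p : FreeGen k B₁) :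
    tauFree k M₁ M₂ (FreeGen.rename k Sum.inl p) = RingQuot.mkRingHom (OmegaRel k M₁) p ⊗ₜ 1 := by
  have h : (tauFree k M₁ M₂).comp (FreeGen.rename k Sum.inl) =
      Algebra.TensorProduct.includeLeft.comp (RingQuot.mkAlgHom k (OmegaRel k M₁)) :=
    FreeAlgebra.hom_ext <| funext fun
      | .inl b => by simp [FreeGen.rename, tauFree, eOm, eGen, RingQuot.mkAlgHom_apply]
      | .inr b => by simp [FreeGen.rename, tauFree, xOm, xGen, RingQuot.mkAlgHom_apply]
  simpa [RingQuot.mkAlgHom_apply] using DFunLike.congr_fun h p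

theorem tauFree_rename_inr (p : FreeGen k B₂) :
    tauFree k M₁ M₂ (FreeGen.rename k Sum.inr p) = 1 ⊗ₜ RingQuot.mkRingHom (OmegaRel k M₂) p := by
  have h : (tauFree k M₁ M₂).comp (FreeGen.rename k Sum.inr) =
      Algebra.TensorProduct.includeRight.comp (RingQuot.mkAlgHom k (OmegaRel k M₂)) :=
    FreeAlgebra.hom_ext <| funext fun
      | .inl b => by simp [FreeGen.rename, tauFree, eOm, eGen, RingQuot.mkAlgHom_apply]
      | .inr b => by simp [FreeGen.rename, tauFree, xOm, xGen, RingQuot.mkAlgHom_apply]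
  simpa [RingQuot.mkAlgHom_apply] using DFunLike.congr_fun h p

theorem commute_tauFree_rename_inl_inr (p : FreeGen k B₁) (q : FreeGen k B₂) :
    Commute (tauFree k M₁ M₂ (FreeGen.rename k Sum.inl p))
      (tauFree k M₁ M₂ (FreeGen.rename k Sum.inr q)) := by
  rw [tauFree_rename_inl, tauFree_rename_inr]
  exact (Commute.one_right _).tmul (Commute.one_left _)

theorem tauFree_lcoeff_braidComm_inl_inr (b : B₁) (b' : B₂) (γ : ℤ) :
    tauFree k M₁ M₂ (lcoeff (braidComm 2 (iotaT k (.inl b)) (iotaT k (.inr b'))) γ) = 0 := by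
  rw [← laurentMap_rename_iotaT, ← laurentMap_rename_iotaT]
  -- `A` is given explicitly: unification cannot solve `Ring.toSemiring ?_ =?= instSemiring`
  -- for the tensor product, while instance search finds its `Ring` structure directly.
  exact map_lcoeff_braidComm_two_eq_zero (A := Omega k M₁ ⊗[k] Omega k M₂)
    (tauFree k M₁ M₂).toRingHom (FreeGen.rename k Sum.inl).toRingHom
    (FreeGen.rename k Sum.inr).toRingHom (commute_tauFree_rename_inl_inr k M₁ M₂) _ _ γ

theorem tauFree_lcoeff_braidComm_inr_inl (b : B₂) (b' : B₁) (γ : ℤ) :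
    tauFree k M₁ M₂ (lcoeff (braidComm 2 (iotaT k (.inr b)) (iotaT k (.inl b'))) γ) = 0 := by
  rw [← laurentMap_rename_iotaT, ← laurentMap_rename_iotaT]
  exact map_lcoeff_braidComm_two_eq_zero (A := Omega k M₁ ⊗[k] Omega k M₂)
    (tauFree k M₁ M₂).toRingHom (FreeGen.rename k Sum.inr).toRingHom
    (FreeGen.rename k Sum.inl).toRingHom
    (fun q p => (commute_tauFree_rename_inl_inr k M₁ M₂ p q).symm) _ _ γ

theorem tauFree_rel ⦃x y : FreeGen k (B₁ ⊕ B₂)⦄ (h : OmegaRel k (prodMatrix M₁ M₂) x y) :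
    tauFree k M₁ M₂ x = tauFree k M₁ M₂ y := by
  induction h with
  | e_idem b => rcases b with b | b <;> simp [eOm_mul_eOm_self]
  | e_comm b b' =>
    rcases b with b | b <;> rcases b' with b' | b' <;> simp [(commute_eOm k _ _ _).eq]
  | ex b => rcases b with b | b <;> simp [eOm_mul_xOm]
  | xe b => rcases b with b | b <;> simp [xOm_mul_eOm]
  | braid b b' h γ =>
    rw [map_zero]
    rcases b with b | b <;> rcases b' with b' | b'
    · rw [prodMatrix_inl_inl, ← rename_lcoeff_braidComm_iotaT, tauFree_rename_inl,
        mkRingHom_lcoeff_braidComm k M₁ h, TensorProduct.zero_tmul]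
    · rw [prodMatrix_inl_inr]
      exact tauFree_lcoeff_braidComm_inl_inr k M₁ M₂ b b' γ
    · rw [prodMatrix_inr_inl]
      exact tauFree_lcoeff_braidComm_inr_inl k M₁ M₂ b b' γ
    · rw [prodMatrix_inr_inr, ← rename_lcoeff_braidComm_iotaT, tauFree_rename_inr,
        mkRingHom_lcoeff_braidComm k M₂ h, TensorProduct.tmul_zero]

def tau : Omega k (prodMatrix M₁ M₂) →ₐ[k] Omega k M₁ ⊗[k] Omega k M₂ :=
  RingQuot.liftAlgHom k ⟨tauFree k M₁ M₂, tauFree_rel k M₁ M₂⟩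

theorem tau_mkRingHom (p : FreeGen k (B₁ ⊕ B₂)) :
    tau k M₁ M₂ (RingQuot.mkRingHom _ p) = tauFree k M₁ M₂ p := by
  rw [← RingQuot.mkAlgHom_apply k, tau, RingQuot.liftAlgHom_mkAlgHom_apply]

theorem tauCond_tau : TauCond k M₁ M₂ (tau k M₁ M₂) := by
  simp [TauCond, eOm, xOm, tau_mkRingHom]

end Product

theorem statement5_general {B₁ B₂ : Type*} (M₁ : CoxeterMatrix B₁) (M₂ : CoxeterMatrix B₂) :
    ∃! t : Omega ℤ (prodMatrix M₁ M₂) →+* Omega ℤ M₁ ⊗[ℤ] Omega ℤ M₂,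
      TauCond ℤ M₁ M₂ ⇑t := by
  have hτ : TauCond ℤ M₁ M₂ (tau ℤ M₁ M₂) := tauCond_tau ℤ M₁ M₂
  refine ⟨(tau ℤ M₁ M₂).toRingHom, hτ, fun t ht => Omega.ringHom_ext_int ?_ ?_⟩
  · rintro (b | b)
    exacts [(ht.1 b).1.trans (hτ.1 b).1.symm, (ht.2 b).1.trans (hτ.2 b).1.symm]
  · rintro (b | b)
    exacts [(ht.1 b).2.trans (hτ.1 b).2.symm, (ht.2 b).2.trans (hτ.2 b).2.symm]

/-- let `W = W₁ × W₂` be a finite Coxeter group with `S = S₁ ⊔ S₂`.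
There is a unique ring homomorphism `τ : Ω(W,S) → Ω(W₁,S₁) ⊗_ℤ Ω(W₂,S₂)` with
`τ(e_s) = e_s ⊗ 1`, `τ(x_s) = x_s ⊗ 1` for `s ∈ S₁` and `τ(e_s) = 1 ⊗ e_s`,
`τ(x_s) = 1 ⊗ x_s` for `s ∈ S₂`. -/
theorem statement5 {B₁ B₂ : Type*} [Fintype B₁] [DecidableEq B₁] [Fintype B₂]
    [DecidableEq B₂] (M₁ : CoxeterMatrix B₁) (M₂ : CoxeterMatrix B₂)
    {W₁ W₂ : Type*} [Group W₁] [Group W₂] [Finite W₁] [Finite W₂]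
    (cs₁ : CoxeterSystem M₁ W₁) (cs₂ : CoxeterSystem M₂ W₂)
    (cs : CoxeterSystem (prodMatrix M₁ M₂) (W₁ × W₂)) :
    ∃! t : Omega ℤ (prodMatrix M₁ M₂) →+* Omega ℤ M₁ ⊗[ℤ] Omega ℤ M₂,
      TauCond ℤ M₁ M₂ ⇑t :=
  statement5_general M₁ M₂

end WGraphPaper

end
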